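/- The sequence b has a linear representation: for every n ≥ 1, b(n) = wᵀ · B_{i₀}···B_{i_s} · v, where i_s···i₀ is the base-3 expansion of n, w = (1,0)ᵀ, v = (0,1)ᵀ, B₀ = [[1,0],[√2,1]], B₁ = [[√2,1],[1,√2]], B₂ = [[1,√2],[0,1]]. -/

import Mathlib

/-- The matrices of the linear representation of Northshield's sequence. -/
noncomputable def B (d : ℕ) : Matrix (Fin 2) (Fin 2) ℝ :=
  if d = 0 then !![1, 0; Real.sqrt 2, 1]
  else if d = 1 then !![Real.sqrt 2, 1; 1, Real.sqrt 2]
  else !![1, Real.sqrt 2; 0, 1]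

/-!
The pair `(b n, b (n + 1))` obeys `(b (3q + d), b (3q + d + 1)) = B d · (b q, b (q + 1))` for each
digit `d`, so peeling off the base-3 digits of `n` from the least significant one expresses
`(b n, b (n + 1))` as the digit product applied to `(b 0, b 1) = (0, 1)`.
-/

open Matrix

theorem Nat.prod_map_digits_mulVec {R ι : Type*} [CommSemiring R] [Fintype ι] [DecidableEq ι]
    {p : ℕ} (hp : 1 < p) (M : ℕ → Matrix ι ι R) (f : ℕ → ι → R)
    (hf : ∀ q d, d < p → f (p * q + d) = M d *ᵥ f q) (n : ℕ) :
    ((Nat.digits p n).map M).prod *ᵥ f 0 = f n := by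
  induction n using Nat.strong_induction_on with
  | _ n ih =>
    rcases Nat.eq_zero_or_pos n with rfl | hn
    · simp
    · rw [Nat.digits_def' hp hn, List.map_cons, List.prod_cons, ← mulVec_mulVec,
        ih (n / p) (Nat.div_lt_self hn hp), ← hf _ _ (Nat.mod_lt n (by omega)),
        Nat.div_add_mod]

section Northshield

variable {b : ℕ → ℝ}
  (hrec0 : ∀ n : ℕ, b (3 * n) = b n)
  (hrec1 : ∀ n : ℕ, b (3 * n + 1) = Real.sqrt 2 * b n + b (n + 1))
  (hrec2 : ∀ n : ℕ, b (3 * n + 2) = b n + Real.sqrt 2 * b (n + 1))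
include hrec0 hrec1 hrec2

theorem northshield_pair_step (q d : ℕ) (hd : d < 3) :
    ![b (3 * q + d), b (3 * q + d + 1)] = B d *ᵥ ![b q, b (q + 1)] := by
  have h3 : 3 * q + 2 + 1 = 3 * (q + 1) := by ring
  interval_cases d <;> ext i <;> fin_cases i <;>
    simp [B, mulVec, hrec0, hrec1, hrec2, h3]

end Northshield

theorem northshield_linear_representation_general (b : ℕ → ℝ)
    (hb1 : b 1 = 1)
    (hrec0 : ∀ n : ℕ, b (3 * n) = b n)
    (hrec1 : ∀ n : ℕ, b (3 * n + 1) = Real.sqrt 2 * b n + b (n + 1))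
    (hrec2 : ∀ n : ℕ, b (3 * n + 2) = b n + Real.sqrt 2 * b (n + 1)) :
    ∀ n : ℕ, 1 ≤ n →
      b n = dotProduct ![1, 0]
        ((((Nat.digits 3 n).map B).prod).mulVec ![0, 1]) := by
  intro n _
  -- the recurrence at `0` reads `b 1 = √2 * b 0 + b 1`
  have hb0 : b 0 = 0 := by simpa [hb1] using hrec1 0
  have hrep := Nat.prod_map_digits_mulVec (by norm_num) B (fun n ↦ ![b n, b (n + 1)])
    (northshield_pair_step hrec0 hrec1 hrec2) n
  simp only [zero_add, hb0, hb1] at hrep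
  rw [hrep, vec2_dotProduct']
  ring

theorem northshield_linear_representation (b : ℕ → ℝ)
    (hb0 : b 0 = 0) (hb1 : b 1 = 1)
    (hrec0 : ∀ n : ℕ, b (3 * n) = b n)
    (hrec1 : ∀ n : ℕ, b (3 * n + 1) = Real.sqrt 2 * b n + b (n + 1))
    (hrec2 : ∀ n : ℕ, b (3 * n + 2) = b n + Real.sqrt 2 * b (n + 1)) :
    ∀ n : ℕ, 1 ≤ n →
      b n = dotProduct ![1, 0]
        ((((Nat.digits 3 n).map B).prod).mulVec ![0, 1]) :=
  northshield_linear_representation_general b hb1 hrec0 hrec1 hrec2
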